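/- Let f, g : 𝖱^n → 𝖱^n be continuous. Then D(f∘g) = D(g)·D(f); equivalently, for all nonempty I, K ⊆ N = {1,…,n}: D_{I,K}(f∘g) = 1 if and only if there exists a nonempty J ⊆ N with D_{I,J}(g) = 1 and D_{J,K}(f) = 1. -/

import Mathlib

noncomputable section
open Set

/-- The first uncountable ordinal `ω₁`. -/
def Omega1 : Ordinal := Ordinal.omega 1

/-- The closed long ray `𝖱`: `ω₁ × [0,1)` with the lexicographic order. -/
def LongRay : Type 1 := {o : Ordinal // o < Omega1} ×ₗ (Set.Ico (0:ℝ) 1)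

instance : LinearOrder LongRay :=
  inferInstanceAs (LinearOrder ({o : Ordinal // o < Omega1} ×ₗ (Set.Ico (0:ℝ) 1)))

/-- `𝖱` carries the order topology. -/
instance : TopologicalSpace LongRay := Preorder.topology LongRay
instance : OrderTopology LongRay := ⟨rfl⟩

lemma omega1_pos : (0 : Ordinal) < Omega1 := Ordinal.omega_pos 1

/-- The point `0 = (0,0)` of the long ray. -/
def rayZero : LongRay := toLex (⟨0, omega1_pos⟩, ⟨0, by simp⟩)

/-- Identification of the countable ordinal `o` with the point `(o,0)` of the long ray
(junk value for `o ≥ ω₁`). -/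
def ordR (o : Ordinal) : LongRay :=
  if h : o < Omega1 then toLex (⟨o, h⟩, ⟨0, by simp⟩) else rayZero

/-- The `I`-diagonal at height `c` (only the values of `c` off `I` are relevant). -/
def Delta (n : ℕ) (I : Finset (Fin n)) (c : Fin n → LongRay) : Set (Fin n → LongRay) :=
  {x | (∀ i ∈ I, ∀ i' ∈ I, x i = x i') ∧ ∀ j ∉ I, x j = c j}

/-- `f` is `I`-cofinal if `f` restricted to `Δ_I = Δ_I(0)` is unbounded. -/
def ICofinal (n : ℕ) (f : (Fin n → LongRay) → LongRay) (I : Finset (Fin n)) : Prop :=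
  ¬ BddAbove (f '' Delta n I (fun _ => rayZero))

/-- The cofinality class `𝔠(f) = {I : f is I-cofinal}`. -/
def cofClass (n : ℕ) (f : (Fin n → LongRay) → LongRay) : Set (Finset (Fin n)) :=
  {I | ICofinal n f I}

/-- `M_I(c) = {x : x_i ≥ c for all i ∈ I}`. -/
def MSet (n : ℕ) (I : Finset (Fin n)) (c : LongRay) : Set (Fin n → LongRay) :=
  {x | ∀ i ∈ I, c ≤ x i}

/-- `E_I(b,d) = {x ∈ M_I(d) : x_j = b_j for all j ∉ I}`. -/
def ESet (n : ℕ) (I : Finset (Fin n)) (b : Fin n → LongRay) (d : LongRay) :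
    Set (Fin n → LongRay) :=
  {x | (∀ i ∈ I, d ≤ x i) ∧ ∀ j ∉ I, x j = b j}

/-- `D_{I,J}(F) = 1`: there is `c` with `F(Δ_I) ∩ Δ_J(c)` unbounded in `Δ_J(c)`. -/
def DirRel (n : ℕ) (F : (Fin n → LongRay) → (Fin n → LongRay)) (I J : Finset (Fin n)) : Prop :=
  ∃ c : Fin n → LongRay,
    ¬ ∃ z : LongRay, ∀ y ∈ (F '' Delta n I (fun _ => rayZero)) ∩ Delta n J c, ∀ j ∈ J, y j ≤ z

/-!
Two facts about a continuous `φ : 𝖱 → 𝖱` carry the proof: if `φ` is unbounded, its fixed points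
form a club (a closed cofinal set); if it is bounded, it is eventually constant. Both hold because
countable subsets of `𝖱` are bounded, so monotone sequences converge and countably many clubs meet
in a club. Consequently a continuous `F` maps `Δ_I`, on a club of parameters, along a diagonal
`Δ_J(v)`, where `J` is the set of coordinates in which `F` is unbounded on `Δ_I`; so
`D_{I,J}(F) = 1` exactly for this `J` (if it is nonempty). A connectedness argument shows that `J`
does not depend on the height of the diagonal `Δ_I(c)`, and then `J(f ∘ g, I) = J(f, J(g, I))`,
which is the product formula.
-/

open Set Filter Topology Function Cardinal Order

section LinearOrder

variable {α : Type*} [LinearOrder α]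

theorem Set.Countable.bddAbove_of_cof_ne_aleph0 [Nonempty α] (hα : cof α ≠ ℵ₀) {s : Set α}
    (hs : s.Countable) : BddAbove s := by
  by_contra h
  have hle : cof α ≤ ℵ₀ :=
    (cof_le (IsCofinal.of_not_bddAbove h)).trans (le_aleph0_iff_set_countable.2 hs)
  obtain ⟨x, hx⟩ := (cof_le_one_iff (α := α)).1 (cof_lt_aleph0_iff.1 (hle.lt_of_ne hα))
  exact h ⟨x, fun y _ => hx y⟩

theorem countableInterFilter_atTop [Nonempty α] (hα : cof α ≠ ℵ₀) :
    CountableInterFilter (atTop : Filter α) where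
  countable_sInter_mem S hS hmem := by
    choose! a ha using fun s hs => mem_atTop_sets.1 (hmem s hs)
    obtain ⟨A, hA⟩ := (hS.image a).bddAbove_of_cof_ne_aleph0 hα
    exact mem_atTop_sets.2 ⟨A, fun t ht s hs => ha s hs t ((hA (mem_image_of_mem a hs)).trans ht)⟩

theorem Filter.Tendsto.eventually_eq_of_cof_ne_aleph0 [Nonempty α] {X : Type*}
    [TopologicalSpace X] [T1Space X] [FirstCountableTopology X] (hα : cof α ≠ ℵ₀) {f : α → X}
    {x : X} (hf : Tendsto f atTop (𝓝 x)) : ∀ᶠ t in atTop, f t = x := by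
  have := countableInterFilter_atTop hα
  obtain ⟨U, hU⟩ := (𝓝 x).exists_antitone_basis
  filter_upwards [eventually_countable_forall.2 fun n => hf (hU.mem n)] with t ht
  by_contra hne
  obtain ⟨n, -, hn⟩ := hU.1.mem_iff.1 (isOpen_compl_singleton.mem_nhds (Ne.symm hne))
  exact hn (ht n) rfl

theorem exists_monotone_seq_of_forall_exists_ge [Nonempty α] (hα : cof α ≠ ℵ₀)
    (P : ℕ → α → α → Prop) (h : ∀ n a, ∃ b, a ≤ b ∧ P n a b) (a : α) :
    ∃ t : ℕ → α, t 0 = a ∧ Monotone t ∧ BddAbove (range t) ∧ ∀ n, P n (t n) (t (n + 1)) := by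
  choose next hle hP using h
  let t : ℕ → α := fun m => Nat.rec a (fun m x => next m x) m
  exact ⟨t, rfl, monotone_nat_of_le_succ fun m => hle m (t m),
    (countable_range t).bddAbove_of_cof_ne_aleph0 hα, fun m => hP m (t m)⟩

theorem isCofinal_iff_frequently_atTop [Nonempty α] {s : Set α} :
    IsCofinal s ↔ ∃ᶠ t in atTop, t ∈ s := by
  simp only [IsCofinal, frequently_atTop]
  exact forall_congr' fun a => ⟨fun ⟨b, hb, hab⟩ => ⟨b, hab, hb⟩, fun ⟨b, hab, hb⟩ => ⟨b, hb, hab⟩⟩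

theorem IsClub.frequently [Nonempty α] {C : Set α} (hC : IsClub C) : ∃ᶠ t in atTop, t ∈ C :=
  isCofinal_iff_frequently_atTop.1 hC.2

theorem isClub_Ici (a : α) : IsClub (Ici a) :=
  ⟨(isUpperSet_Ici a).dirSupClosed, fun b => ⟨max a b, le_max_left a b, le_max_right a b⟩⟩

theorem not_bddAbove_range_of_frequently_eq_self [NoMaxOrder α] {f : α → α}
    (h : ∃ᶠ t in atTop, f t = t) : ¬BddAbove (range f) := by
  rintro ⟨z, hz⟩
  obtain ⟨t, hft, hzt⟩ := (h.and_eventually (eventually_gt_atTop z)).exists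
  exact (hz ⟨t, rfl⟩).not_gt (by rwa [hft])

variable [TopologicalSpace α] [OrderTopology α]

theorem IsClosed.dirSupClosed {s : Set α} (hs : IsClosed s) : DirSupClosed s :=
  dirSupClosed_iff_of_linearOrder.2 fun _d hds hd _a ha =>
    hs.closure_subset_iff.2 hds (ha.mem_closure hd)

theorem firstCountableTopology_of_countable_approx
    (h : ∀ a : α, ∃ C : Set α, C.Countable ∧ (∀ b < a, ∃ c ∈ C, b ≤ c ∧ c < a) ∧
      ∀ b, a < b → ∃ c ∈ C, a < c ∧ c ≤ b) :
    FirstCountableTopology α := by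
  refine ⟨fun a => ?_⟩
  obtain ⟨C, hC, below, above⟩ := h a
  have : Countable ↥(C ∩ Iio a) := (hC.mono inter_subset_left).to_subtype
  have : Countable ↥(C ∩ Ioi a) := (hC.mono inter_subset_left).to_subtype
  have := isCountablyGenerated_seq fun c : ↥(C ∩ Iio a) => Ioi (c : α)
  have := isCountablyGenerated_seq fun c : ↥(C ∩ Ioi a) => Iio (c : α)
  suffices 𝓝 a = (⨅ c : ↥(C ∩ Iio a), 𝓟 (Ioi (c : α))) ⊓ ⨅ c : ↥(C ∩ Ioi a), 𝓟 (Iio (c : α)) by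
    rw [this]; infer_instance
  rw [nhds_eq_order]
  congr 1 <;>
    refine le_antisymm (le_iInf fun c => iInf₂_le (c : α) c.2.2) (le_iInf₂ fun b hb => ?_)
  · obtain ⟨c, hc, hbc, hca⟩ := below b hb
    exact iInf_le_of_le ⟨c, hc, hca⟩ (principal_mono.2 (Ioi_subset_Ioi hbc))
  · obtain ⟨c, hc, hac, hcb⟩ := above b hb
    exact iInf_le_of_le ⟨c, hc, hac⟩ (principal_mono.2 (Iio_subset_Iio hcb))

end LinearOrder

section ConditionallyComplete

variable {α : Type*} [ConditionallyCompleteLinearOrder α] [Nonempty α]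

theorem IsClub.iInter_nat (hα : cof α ≠ ℵ₀) {C : ℕ → Set α} (hC : ∀ k, IsClub (C k)) :
    IsClub (⋂ k, C k) := by
  refine ⟨.iInter fun k => (hC k).1, fun a => ?_⟩
  obtain ⟨t, rfl, ht, hb, htC⟩ := exists_monotone_seq_of_forall_exists_ge hα
    (fun m _ b => b ∈ C m.unpair.1) (fun m x => ((hC _).2 x).imp fun b hb => ⟨hb.2, hb.1⟩) a
  refine ⟨⨆ m, t m, mem_iInter.2 fun k => ?_, le_ciSup hb 0⟩
  -- `t (Nat.pair k j + 1) ∈ C k` for every `j`, and these terms are cofinal in `t`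
  refine (hC k).isLUB_mem (t := range fun j => t (Nat.pair k j + 1)) ?_ (range_nonempty _)
    ⟨?_, fun b hb' => ciSup_le fun m => ?_⟩
  · rintro _ ⟨j, rfl⟩
    simpa using htC (Nat.pair k j)
  · rintro _ ⟨j, rfl⟩
    exact le_ciSup hb _
  · exact (ht ((Nat.right_le_pair k m).trans (Nat.le_succ _))).trans (hb' ⟨m, rfl⟩)

theorem IsClub.iInter_of_countable' (hα : cof α ≠ ℵ₀) {ι : Sort*} [Countable ι]
    {C : ι → Set α} (hC : ∀ i, IsClub (C i)) : IsClub (⋂ i, C i) := by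
  rcases isEmpty_or_nonempty ι with hι | hι
  · simp
  · obtain ⟨e, he⟩ := exists_surjective_nat ι
    rw [← he.iInter_comp]
    exact .iInter_nat hα fun k => hC (e k)

theorem IsClub.inter' (hα : cof α ≠ ℵ₀) {C D : Set α} (hC : IsClub C) (hD : IsClub D) :
    IsClub (C ∩ D) := by
  rw [inter_eq_iInter]
  exact .iInter_of_countable' hα (Bool.forall_bool.2 ⟨hD, hC⟩)

end ConditionallyComplete

section Continuous

variable {α : Type*} [ConditionallyCompleteLinearOrderBot α] [TopologicalSpace α]
  [OrderTopology α] {f : α → α}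

theorem Continuous.bddAbove_image_Iic (hf : Continuous f) (a : α) : BddAbove (f '' Iic a) := by
  rw [← Icc_bot]
  exact (isCompact_Icc.image hf).bddAbove

theorem Continuous.bddAbove_range_of_eventually_le (hf : Continuous f) {z : α}
    (h : ∀ᶠ t in atTop, f t ≤ z) : BddAbove (range f) := by
  obtain ⟨a, ha⟩ := eventually_atTop.1 h
  obtain ⟨M, hM⟩ := hf.bddAbove_image_Iic a
  refine ⟨max M z, ?_⟩
  rintro _ ⟨t, rfl⟩
  rcases le_total t a with hta | hat
  · exact le_max_of_le_left (hM (mem_image_of_mem f hta))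
  · exact le_max_of_le_right (ha t hat)

theorem Continuous.isClub_setOf_apply_le (hα : cof α ≠ ℵ₀) (hf : Continuous f) :
    IsClub {t | f t ≤ t} := by
  refine ⟨(isClosed_le hf continuous_id).dirSupClosed, fun a => ?_⟩
  obtain ⟨t, rfl, ht, hb, hP⟩ := exists_monotone_seq_of_forall_exists_ge hα
    (fun _ x y => f x ≤ y) (fun _ x => ⟨max x (f x), le_max_left _ _, le_max_right _ _⟩) a
  have hL := tendsto_atTop_ciSup ht hb
  refine ⟨_, ?_, le_ciSup hb 0⟩
  exact le_of_tendsto_of_tendsto' ((hf.tendsto _).comp hL) (hL.comp (tendsto_add_atTop_nat 1)) hP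

theorem Continuous.isClub_setOf_le_apply (hα : cof α ≠ ℵ₀) (hf : Continuous f)
    (hu : ¬BddAbove (range f)) : IsClub {t | t ≤ f t} := by
  refine ⟨(isClosed_le continuous_id hf).dirSupClosed, fun a => ?_⟩
  have step (x : α) : ∃ y, x ≤ y ∧ x ≤ f y := by
    obtain ⟨M, hM⟩ := hf.bddAbove_image_Iic x
    obtain ⟨_, ⟨y, rfl⟩, hy⟩ := not_bddAbove_iff.1 hu (max M x)
    -- `f y` exceeds every value of `f` on `Iic x`, so `y` lies beyond `x`
    refine ⟨y, le_of_not_ge fun hyx => ?_, (le_max_right M x).trans hy.le⟩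
    exact (hM (mem_image_of_mem f hyx)).not_gt ((le_max_left M x).trans_lt hy)
  obtain ⟨t, rfl, ht, hb, hP⟩ := exists_monotone_seq_of_forall_exists_ge hα
    (fun _ x y => x ≤ f y) (fun _ => step) a
  have hL := tendsto_atTop_ciSup ht hb
  refine ⟨_, ?_, le_ciSup hb 0⟩
  exact le_of_tendsto_of_tendsto' hL ((hf.tendsto _).comp (hL.comp (tendsto_add_atTop_nat 1))) hP

theorem Continuous.isClub_fixedPoints (hα : cof α ≠ ℵ₀) (hf : Continuous f)
    (hu : ¬BddAbove (range f)) : IsClub (fixedPoints f) := by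
  have : fixedPoints f = {t | f t ≤ t} ∩ {t | t ≤ f t} := by
    ext t
    simp [IsFixedPt, le_antisymm_iff]
  rw [this]
  exact (hf.isClub_setOf_apply_le hα).inter' hα (hf.isClub_setOf_le_apply hα hu)

theorem Continuous.bddAbove_preimage_singleton [NoMaxOrder α] (hα : cof α ≠ ℵ₀)
    (hf : Continuous f) (hu : ¬BddAbove (range f)) (w : α) : BddAbove (f ⁻¹' {w}) := by
  by_contra h
  have hE : IsClub (f ⁻¹' {w}) :=
    ⟨(isClosed_singleton.preimage hf).dirSupClosed, IsCofinal.of_not_bddAbove h⟩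
  obtain ⟨t, ⟨hfix, hw⟩, hwt⟩ := (((hf.isClub_fixedPoints hα hu).inter' hα hE).frequently
    |>.and_eventually (eventually_gt_atTop w)).exists
  exact hwt.ne ((hw : f t = w).symm.trans hfix)

theorem Continuous.liminf_eq_limsup [DenselyOrdered α] (hα : cof α ≠ ℵ₀) (hf : Continuous f)
    {z : α} (hz : ∀ t, f t ≤ z) : liminf f atTop = limsup f atTop := by
  refine (liminf_le_limsup (isBoundedUnder_of ⟨z, hz⟩)).antisymm (not_lt.1 fun hlt => ?_)
  obtain ⟨m₁, h₁, hm⟩ := exists_between hlt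
  obtain ⟨m₂, hm₁₂, h₂⟩ := exists_between hm
  have hC₁ : IsClub {t | f t ≤ m₁} :=
    ⟨(isClosed_le hf continuous_const).dirSupClosed, isCofinal_iff_frequently_atTop.2 <|
      (frequently_lt_of_liminf_lt (isCoboundedUnder_ge_of_le atTop hz) h₁).mono fun _ => le_of_lt⟩
  have hC₂ : IsClub {t | m₂ ≤ f t} :=
    ⟨(isClosed_le continuous_const hf).dirSupClosed, isCofinal_iff_frequently_atTop.2 <|
      (frequently_lt_of_lt_limsup (h := h₂)).mono fun _ => le_of_lt⟩
  obtain ⟨t, ht₁, ht₂⟩ := (hC₁.inter' hα hC₂).nonempty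
  exact (ht₂.trans ht₁).not_gt hm₁₂

theorem Continuous.exists_eventually_eq_of_bddAbove [DenselyOrdered α] [FirstCountableTopology α]
    (hα : cof α ≠ ℵ₀) (hf : Continuous f) (hb : BddAbove (range f)) :
    ∃ v, ∀ᶠ t in atTop, f t = v := by
  obtain ⟨z, hz⟩ := hb
  have hz' (t : α) : f t ≤ z := hz ⟨t, rfl⟩
  exact ⟨_, (tendsto_of_liminf_eq_limsup (hf.liminf_eq_limsup hα hz') rfl
    (isBoundedUnder_of ⟨z, hz'⟩)).eventually_eq_of_cof_ne_aleph0 hα⟩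

theorem bddAbove_range_iff_of_continuous_uncurry [DenselyOrdered α] [NoMaxOrder α]
    [FirstCountableTopology α] {β : Type*} [TopologicalSpace β] [PreconnectedSpace β]
    [FirstCountableTopology β] (hα : cof α ≠ ℵ₀) {ψ : β → α → α} (hψ : Continuous (uncurry ψ))
    (b b' : β) : BddAbove (range (ψ b)) ↔ BddAbove (range (ψ b')) := by
  have hcont (b : β) : Continuous (ψ b) := hψ.comp (Continuous.prodMk_right b)
  have hlim {x : ℕ → β} {b : β} (hx : Tendsto x atTop (𝓝 b)) (t : α) :
      Tendsto (fun i => ψ (x i) t) atTop (𝓝 (ψ b t)) :=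
    ((hψ.comp (Continuous.prodMk_left t)).tendsto b).comp hx
  have hclosed : IsClosed {b | BddAbove (range (ψ b))} := by
    refine isClosed_of_closure_subset fun b hb => ?_
    obtain ⟨x, hxS, hx⟩ := mem_closure_iff_seq_limit.1 hb
    choose v hv using fun i => (hcont (x i)).exists_eventually_eq_of_bddAbove hα (hxS i)
    obtain ⟨Z, hZ⟩ := (countable_range v).bddAbove_of_cof_ne_aleph0 hα
    have := countableInterFilter_atTop hα
    refine (hcont b).bddAbove_range_of_eventually_le (z := Z) ?_
    filter_upwards [eventually_countable_forall.2 hv] with t ht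
    exact le_of_tendsto' (hlim hx t) fun i => (ht i).trans_le (hZ ⟨i, rfl⟩)
  have hopen : IsClosed {b | BddAbove (range (ψ b))}ᶜ := by
    refine isClosed_of_closure_subset fun b hb => ?_
    obtain ⟨x, hxS, hx⟩ := mem_closure_iff_seq_limit.1 hb
    have hC := IsClub.iInter_of_countable' hα fun i => (hcont (x i)).isClub_fixedPoints hα (hxS i)
    refine not_bddAbove_range_of_frequently_eq_self (hC.frequently.mono fun t ht => ?_)
    exact tendsto_nhds_unique (hlim hx t)
      (tendsto_const_nhds.congr fun i => (mem_iInter.1 ht i).symm)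
  rcases isClopen_iff.1 ⟨hclosed, isClosed_compl_iff.1 hopen⟩ with h | h
  · exact iff_of_false (fun hb => notMem_empty b (h.subset hb))
      fun hb => notMem_empty b' (h.subset hb)
  · exact iff_of_true (h.symm.subset (mem_univ b)) (h.symm.subset (mem_univ b'))

end Continuous

namespace LongRay

def ord (x : LongRay) : Ordinal := (ofLex x).1

def re (x : LongRay) : ℝ := (ofLex x).2

theorem ord_lt (x : LongRay) : x.ord < Omega1 := (ofLex x).1.2

theorem re_mem (x : LongRay) : x.re ∈ Ico (0 : ℝ) 1 := (ofLex x).2.2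

def mk (o : Ordinal) (ho : o < Omega1) (r : ℝ) (hr : r ∈ Ico (0 : ℝ) 1) : LongRay :=
  toLex (⟨o, ho⟩, ⟨r, hr⟩)

theorem ext {x y : LongRay} (h₁ : x.ord = y.ord) (h₂ : x.re = y.re) : x = y :=
  ofLex.injective (Prod.ext (Subtype.ext h₁) (Subtype.ext h₂))

theorem le_iff {x y : LongRay} : x ≤ y ↔ x.ord < y.ord ∨ x.ord = y.ord ∧ x.re ≤ y.re :=
  Prod.Lex.le_iff.trans <| by rw [Subtype.ext_iff]; rfl

theorem lt_iff {x y : LongRay} : x < y ↔ x.ord < y.ord ∨ x.ord = y.ord ∧ x.re < y.re :=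
  Prod.Lex.lt_iff.trans <| by rw [Subtype.ext_iff]; rfl

theorem add_one_lt_omega1 {o : Ordinal} (ho : o < Omega1) : o + 1 < Omega1 :=
  Order.succ_eq_add_one o ▸ (Cardinal.isSuccLimit_omega 1).succ_lt ho

instance : OrderBot LongRay where
  bot := rayZero
  bot_le x := le_iff.2 <| (zero_le (a := x.ord)).lt_or_eq.imp id fun h => ⟨h, x.re_mem.1⟩

instance : NoMaxOrder LongRay :=
  inferInstanceAs (NoMaxOrder ({o : Ordinal // o < Omega1} ×ₗ Ico (0 : ℝ) 1))

instance : DenselyOrdered LongRay :=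
  inferInstanceAs (DenselyOrdered ({o : Ordinal // o < Omega1} ×ₗ Ico (0 : ℝ) 1))

/-- The supremum has the least ordinal coordinate of an upper bound and, above it, the infimum of
the real coordinates of the upper bounds with that ordinal coordinate. -/
theorem exists_isLUB {s : Set LongRay} (hs : BddAbove s) : ∃ x, IsLUB s x := by
  obtain ⟨α, ⟨u, hu, rfl⟩, hα⟩ : ∃ α ∈ ord '' upperBounds s, ∀ β ∈ ord '' upperBounds s, α ≤ β :=
    ⟨_, csInf_mem (hs.image ord), fun β hβ => csInf_le' hβ⟩
  set R := re '' {z ∈ upperBounds s | z.ord = u.ord}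
  have hR : BddBelow R := ⟨0, by rintro _ ⟨z, -, rfl⟩; exact z.re_mem.1⟩
  have hRu : u.re ∈ R := ⟨u, ⟨hu, rfl⟩, rfl⟩
  have hr : sInf R ∈ Ico (0 : ℝ) 1 :=
    ⟨le_csInf ⟨_, hRu⟩ fun _ ⟨z, _, hz⟩ => hz ▸ z.re_mem.1, (csInf_le hR hRu).trans_lt u.re_mem.2⟩
  refine ⟨mk u.ord u.ord_lt (sInf R) hr, fun x hx => le_iff.2 ?_, fun z hz => le_iff.2 ?_⟩
  · refine (le_iff.1 (hu hx)).imp id fun ⟨hxu, _⟩ => ⟨hxu, le_csInf ⟨_, hRu⟩ ?_⟩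
    rintro _ ⟨z, ⟨hz, hzu⟩, rfl⟩
    exact ((le_iff.1 (hz hx)).resolve_left (hxu.trans hzu.symm).not_lt).2
  · refine (hα _ ⟨z, hz, rfl⟩).lt_or_eq.imp id fun huz => ⟨huz, ?_⟩
    exact csInf_le hR ⟨z, ⟨hz, huz.symm⟩, rfl⟩

open Classical in
instance : SupSet LongRay := ⟨fun s => if hs : BddAbove s then (exists_isLUB hs).choose else ⊥⟩

theorem isLUB_sSup {s : Set LongRay} (hs : BddAbove s) : IsLUB s (sSup s) := by
  simp only [sSup, dif_pos hs]
  exact (exists_isLUB hs).choose_spec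

theorem sSup_empty : sSup (∅ : Set LongRay) = ⊥ :=
  (isLUB_sSup bddAbove_empty).unique isLUB_empty

instance : ConditionallyCompleteLinearOrderBot LongRay where
  __ := (inferInstance : LinearOrder LongRay)
  __ := (inferInstance : OrderBot LongRay)
  __ := LinearOrder.toLattice
  __ := conditionallyCompleteLatticeOfLatticeOfsSup LongRay fun _ hs _ => isLUB_sSup hs
  csSup_empty := sSup_empty
  csSup_of_not_bddAbove _ hs := (dif_neg hs).trans sSup_empty.symm
  csInf_of_not_bddBelow s hs := (hs (OrderBot.bddBelow s)).elim

theorem bddAbove_of_countable {s : Set LongRay} (hs : s.Countable) : BddAbove s := by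
  have := hs.to_subtype
  have hlt : ⨆ x : s, ((x : LongRay).ord + 1) < Omega1 :=
    Ordinal.iSup_lt_omega_one fun x => add_one_lt_omega1 (x : LongRay).ord_lt
  refine ⟨mk _ hlt 0 ⟨le_rfl, zero_lt_one⟩, fun x hx => le_iff.2 (Or.inl ?_)⟩
  exact (Order.lt_add_one_iff.2 le_rfl).trans_le
    (Ordinal.le_iSup (fun x : s => (x : LongRay).ord + 1) ⟨x, hx⟩)

theorem cof_ne_aleph0 : cof LongRay ≠ ℵ₀ := by
  intro h
  obtain ⟨s, hs, hcard⟩ := exists_cof_eq LongRay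
  obtain ⟨b, hb⟩ := bddAbove_of_countable (le_aleph0_iff_set_countable.1 (hcard.trans h).le)
  obtain ⟨c, hbc⟩ := exists_gt b
  obtain ⟨y, hy, hcy⟩ := hs c
  exact (hb hy).not_gt (hbc.trans_le hcy)

theorem countable_Iic_ord (x : LongRay) : (Iic x.ord).Countable := by
  rw [← le_aleph0_iff_set_countable, ← Order.Iio_succ, Cardinal.mk_Iio_ordinal,
    Cardinal.lift_le_aleph0]
  exact lt_aleph_one_iff.1 <|
    lt_omega_iff_card_lt.1 (Order.succ_eq_add_one x.ord ▸ add_one_lt_omega1 x.ord_lt)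

theorem exists_rat_re_between {o : Ordinal} (ho : o < Omega1) {r s : ℝ} (hr : 0 ≤ r)
    (hrs : r < s) (hs : s ≤ 1) :
    ∃ c : LongRay, c.ord = o ∧ c.re ∈ range ((↑) : ℚ → ℝ) ∧ r < c.re ∧ c.re < s := by
  obtain ⟨q, hrq, hqs⟩ := exists_rat_btwn hrs
  exact ⟨mk o ho q ⟨hr.trans hrq.le, hqs.trans_le hs⟩, rfl, ⟨q, rfl⟩, hrq, hqs⟩

instance : FirstCountableTopology LongRay := by
  refine firstCountableTopology_of_countable_approx fun a =>
    ⟨(fun x => (x.ord, x.re)) ⁻¹' (Iic a.ord ×ˢ range ((↑) : ℚ → ℝ)),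
      ((countable_Iic_ord a).prod (countable_range _)).preimage_of_injOn
        fun x _ y _ h => ext (congrArg Prod.fst h) (congrArg Prod.snd h),
      fun b hb => ?_, fun b hb => ?_⟩
  · rcases lt_iff.1 hb with hba | ⟨hba, hr⟩
    · obtain ⟨c, hc, hq, h₁, -⟩ :=
        exists_rat_re_between b.ord_lt b.re_mem.1 b.re_mem.2 le_rfl
      exact ⟨c, ⟨hc.trans_le hba.le, hq⟩, le_iff.2 (Or.inr ⟨hc.symm, h₁.le⟩),
        lt_iff.2 (Or.inl (hc ▸ hba))⟩
    · obtain ⟨c, hc, hq, h₁, h₂⟩ := exists_rat_re_between a.ord_lt b.re_mem.1 hr a.re_mem.2.le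
      exact ⟨c, ⟨hc.le, hq⟩, le_iff.2 (Or.inr ⟨hba.trans hc.symm, h₁.le⟩),
        lt_iff.2 (Or.inr ⟨hc, h₂⟩)⟩
  · rcases lt_iff.1 hb with hab | ⟨hab, hr⟩
    · obtain ⟨c, hc, hq, h₁, -⟩ :=
        exists_rat_re_between a.ord_lt a.re_mem.1 a.re_mem.2 le_rfl
      exact ⟨c, ⟨hc.le, hq⟩, lt_iff.2 (Or.inr ⟨hc.symm, h₁⟩), le_iff.2 (Or.inl (hc ▸ hab))⟩
    · obtain ⟨c, hc, hq, h₁, h₂⟩ := exists_rat_re_between a.ord_lt a.re_mem.1 hr b.re_mem.2.le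
      exact ⟨c, ⟨hc.le, hq⟩, lt_iff.2 (Or.inr ⟨hc.symm, h₁⟩),
        le_iff.2 (Or.inr ⟨hc.trans hab, h₂.le⟩)⟩

variable {n : ℕ}

def diag (I : Finset (Fin n)) (c : Fin n → LongRay) (t : LongRay) : Fin n → LongRay :=
  fun i => if i ∈ I then t else c i

theorem continuous_diag (I : Finset (Fin n)) :
    Continuous fun p : (Fin n → LongRay) × LongRay => diag I p.1 p.2 :=
  continuous_pi fun i => continuous_if_const _ (fun _ => continuous_snd)
    fun _ => (continuous_apply i).comp continuous_fst

theorem Delta_eq_range_diag (I : Finset (Fin n)) (c : Fin n → LongRay) :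
    Delta n I c = range (diag I c) := by
  ext x
  constructor
  · rintro ⟨hI, hc⟩
    rcases I.eq_empty_or_nonempty with rfl | ⟨i₀, hi₀⟩
    · exact ⟨⊥, funext fun j => by simp [diag, hc j (Finset.notMem_empty j)]⟩
    · refine ⟨x i₀, funext fun j => ?_⟩
      by_cases hj : j ∈ I
      · simp [diag, hj, hI i₀ hi₀ j hj]
      · simp [diag, hj, hc j hj]
  · rintro ⟨t, rfl⟩
    exact ⟨fun i hi i' hi' => by simp [diag, hi, hi'], fun j hj => by simp [diag, hj]⟩

open Classical in
def unbddCoords (F : (Fin n → LongRay) → Fin n → LongRay) (I : Finset (Fin n))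
    (c : Fin n → LongRay) : Finset (Fin n) :=
  Finset.univ.filter fun k => ¬BddAbove (range fun t => F (diag I c t) k)

variable {F : (Fin n → LongRay) → Fin n → LongRay}

theorem mem_unbddCoords {I : Finset (Fin n)} {c : Fin n → LongRay} {k : Fin n} :
    k ∈ unbddCoords F I c ↔ ¬BddAbove (range fun t => F (diag I c t) k) := by
  simp [unbddCoords]

theorem unbddCoords_empty (c : Fin n → LongRay) : unbddCoords F ∅ c = ∅ := by
  have hconst (t : LongRay) : diag ∅ c t = c := funext fun i => if_neg (Finset.notMem_empty i)
  ext k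
  simp [mem_unbddCoords, hconst]

theorem continuous_apply_diag (hF : Continuous F) (I : Finset (Fin n)) (c : Fin n → LongRay)
    (k : Fin n) : Continuous fun t => F (diag I c t) k :=
  (continuous_apply k).comp (hF.comp ((continuous_diag I).comp (Continuous.prodMk_right c)))

theorem unbddCoords_congr (hF : Continuous F) (I : Finset (Fin n)) (c c' : Fin n → LongRay) :
    unbddCoords F I c = unbddCoords F I c' := by
  ext k
  simp only [mem_unbddCoords, not_iff_not]
  exact bddAbove_range_iff_of_continuous_uncurry cof_ne_aleph0 (ψ := fun c t => F (diag I c t) k)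
    ((continuous_apply k).comp (hF.comp (continuous_diag I))) c c'

theorem exists_isClub_diag_eq (hF : Continuous F) (I : Finset (Fin n)) (c : Fin n → LongRay) :
    ∃ v C, IsClub C ∧ ∀ t ∈ C, F (diag I c t) = diag (unbddCoords F I c) v t := by
  have key (k : Fin n) : ∃ w C, IsClub C ∧
      ∀ t ∈ C, F (diag I c t) k = if k ∈ unbddCoords F I c then t else w := by
    have hk' := continuous_apply_diag hF I c k
    by_cases hk : k ∈ unbddCoords F I c
    · exact ⟨⊥, _, hk'.isClub_fixedPoints cof_ne_aleph0 (mem_unbddCoords.1 hk),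
        fun t ht => (ht : _ = t).trans (if_pos hk).symm⟩
    · obtain ⟨w, hw⟩ :=
        hk'.exists_eventually_eq_of_bddAbove cof_ne_aleph0 (not_not.1 (mem_unbddCoords.not.1 hk))
      obtain ⟨a, ha⟩ := eventually_atTop.1 hw
      exact ⟨w, Ici a, isClub_Ici a, fun t ht => (ha t ht).trans (if_neg hk).symm⟩
  choose v C hC hCv using key
  exact ⟨v, ⋂ k, C k, .iInter_of_countable' cof_ne_aleph0 hC,
    fun t ht => funext fun k => hCv k t (mem_iInter.1 ht k)⟩

theorem unbddCoords_comp {f g : (Fin n → LongRay) → Fin n → LongRay} (hf : Continuous f)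
    (hg : Continuous g) (I : Finset (Fin n)) (c c' : Fin n → LongRay) :
    unbddCoords (f ∘ g) I c = unbddCoords f (unbddCoords g I c) c' := by
  obtain ⟨v, C, hC, hCv⟩ := exists_isClub_diag_eq hg I c
  have hfg (t) (ht : t ∈ C) (k) :
      (f ∘ g) (diag I c t) k = f (diag (unbddCoords g I c) v t) k := by
    rw [comp_apply, hCv t ht]
  rw [unbddCoords_congr hf _ c' v]
  ext k
  rw [mem_unbddCoords, mem_unbddCoords]
  constructor
  · intro hk hb
    obtain ⟨w, hw⟩ :=
      (continuous_apply_diag hf _ v k).exists_eventually_eq_of_bddAbove cof_ne_aleph0 hb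
    have hD := (continuous_apply_diag (hf.comp hg) I c k).isClub_fixedPoints cof_ne_aleph0 hk
    obtain ⟨t, ⟨htC, hfix⟩, hwt, htw⟩ := ((hC.inter' cof_ne_aleph0 hD).frequently.and_eventually
      (hw.and (eventually_ne_atTop w))).exists
    exact htw (hfix.symm.trans ((hfg t htC k).trans hwt))
  · intro hk
    have hE := (continuous_apply_diag hf _ v k).isClub_fixedPoints cof_ne_aleph0 hk
    refine not_bddAbove_range_of_frequently_eq_self
      ((hC.inter' cof_ne_aleph0 hE).frequently.mono ?_)
    rintro t ⟨htC, hfix⟩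
    exact (hfg t htC k).trans hfix

theorem dirRel_iff (hF : Continuous F) (I K : Finset (Fin n)) :
    DirRel n F I K ↔ K.Nonempty ∧ K = unbddCoords F I (fun _ => rayZero) := by
  have hcont := continuous_apply_diag hF I (fun _ => rayZero)
  rw [DirRel, Delta_eq_range_diag I, ← range_comp]
  constructor
  · rintro ⟨c, hc⟩
    push Not at hc
    obtain ⟨-, -, j, hj, -⟩ := hc ⊥
    refine ⟨⟨j, hj⟩, Finset.Subset.antisymm (fun k hk => ?_) fun k hk => ?_⟩
    · refine mem_unbddCoords.2 (not_bddAbove_iff.2 fun z => ?_)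
      obtain ⟨_, ⟨⟨t, rfl⟩, hK⟩, j, hj, hzj⟩ := hc z
      exact ⟨_, ⟨t, rfl⟩, hzj.trans_eq (hK.1 j hj k hk)⟩
    · by_contra hkK
      -- `F(Δ_I) ∩ Δ_K(c)` only meets the parameters `t` with `F (diag I 0 t) k = c k`
      obtain ⟨b, hb⟩ :=
        (hcont k).bddAbove_preimage_singleton cof_ne_aleph0 (mem_unbddCoords.1 hk) (c k)
      choose M hM using fun j => (hcont j).bddAbove_image_Iic b
      obtain ⟨z, hz⟩ := (finite_range M).bddAbove
      obtain ⟨_, ⟨⟨t, rfl⟩, hK⟩, j, -, hzj⟩ := hc z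
      exact hzj.not_ge ((hM j ⟨t, hb (hK.2 k hkK), rfl⟩).trans (hz ⟨j, rfl⟩))
  · rintro ⟨⟨k, hk⟩, rfl⟩
    obtain ⟨v, C, hC, hCv⟩ := exists_isClub_diag_eq hF I (fun _ => rayZero)
    refine ⟨v, fun ⟨z, hz⟩ => ?_⟩
    obtain ⟨t, htC, hzt⟩ := (hC.frequently.and_eventually (eventually_gt_atTop z)).exists
    have := hz _ ⟨⟨t, rfl⟩, (Delta_eq_range_diag _ v).superset ⟨t, (hCv t htC).symm⟩⟩ k hk
    simp only [comp_apply, hCv t htC, diag, hk, if_true] at this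
    exact this.not_gt hzt

end LongRay

theorem direction_matrix_mul_general (n : ℕ) (f g : (Fin n → LongRay) → (Fin n → LongRay))
    (hf : Continuous f) (hg : Continuous g)
    (I K : Finset (Fin n)) :
    DirRel n (f ∘ g) I K ↔
      ∃ J : Finset (Fin n), J.Nonempty ∧ DirRel n g I J ∧ DirRel n f J K := by
  simp only [LongRay.dirRel_iff hf, LongRay.dirRel_iff hg, LongRay.dirRel_iff (hf.comp hg),
    LongRay.unbddCoords_comp hf hg I _ (fun _ => rayZero)]
  constructor
  · rintro ⟨hK, rfl⟩
    have hJ : (LongRay.unbddCoords g I fun _ => rayZero).Nonempty :=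
      Finset.nonempty_iff_ne_empty.2 fun hJ => hK.ne_empty (by rw [hJ, LongRay.unbddCoords_empty])
    exact ⟨_, hJ, ⟨hJ, rfl⟩, hK, rfl⟩
  · rintro ⟨J, -, ⟨-, rfl⟩, hK, rfl⟩
    exact ⟨hK, rfl⟩

/-- `D(f ∘ g) = D(g) · D(f)`. -/
theorem direction_matrix_mul (n : ℕ) (f g : (Fin n → LongRay) → (Fin n → LongRay))
    (hf : Continuous f) (hg : Continuous g)
    (I K : Finset (Fin n)) (hI : I.Nonempty) (hK : K.Nonempty) :
    DirRel n (f ∘ g) I K ↔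
      ∃ J : Finset (Fin n), J.Nonempty ∧ DirRel n g I J ∧ DirRel n f J K :=
  direction_matrix_mul_general n f g hf hg I K
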